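/- Secret protection is a relaxation of GDP at a single point: there exist pairs of probability distributions (P, Q) on ℝ and parameters 0 < p < r < 1 with B_{(P,Q)}(p) ≤ r (so the pair meets the (p,r)-secret-protection constraint at prior p), yet T_{(P,Q)}(α) < G_μ(α) for some α ∈ (0,1), where μ = Φ^{-1}(1-p) - Φ^{-1}(1-r). That is, controlling the blow-up function at one prior does not imply domination of the entire Gaussian trade-off curve. -/

import Mathlib

open MeasureTheory ProbabilityTheory Set

/-- Standard normal CDF. -/
noncomputable def Phi : ℝ → ℝ := fun x => ProbabilityTheory.cdf (gaussianReal 0 1) x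

/-- Inverse of the standard normal CDF. -/
noncomputable def PhiInv : ℝ → ℝ := Function.invFun Phi

/-- Gaussian trade-off function `G_μ(α) = Φ(Φ⁻¹(1-α) - μ)`. -/
noncomputable def Gmu (μ α : ℝ) : ℝ := Phi (PhiInv (1 - α) - μ)

/-- Trade-off function `T_{(P,Q)}(α) = inf {P(Eᶜ) : Q(E) ≤ α}`. -/
noncomputable def tradeOff {Ω : Type*} [MeasurableSpace Ω] (P Q : Measure Ω) (α : ℝ) : ℝ :=
  sInf {x : ℝ | ∃ E : Set Ω, MeasurableSet E ∧ (Q E).toReal ≤ α ∧ x = (P Eᶜ).toReal}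

/-- Blow-up function `B_{(P,Q)}(α) = sup {P(E) : Q(E) ≤ α}`. -/
noncomputable def blowUp {Ω : Type*} [MeasurableSpace Ω] (P Q : Measure Ω) (α : ℝ) : ℝ :=
  sSup {x : ℝ | ∃ E : Set Ω, MeasurableSet E ∧ (Q E).toReal ≤ α ∧ x = (P E).toReal}

/-!
Take `Q = δ₀` and `P = ¼ δ₀ + ¾ δ₁`, with `p = 1/2`, `r = 3/4`. A set of `Q`-mass below `1` misses
the atom `0`, so `B(p) ≤ P({0}ᶜ) = r`. The test `E = {1}` has `Q(E) = 0`, hence `T(1/4) ≤ P{0} = 1/4`,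
whereas `G_μ(1/4) = Φ(Φ⁻¹(1/4) + Φ⁻¹(3/4) - Φ⁻¹(1/2)) > Φ(Φ⁻¹(1/4)) = 1/4`.
-/

open scoped ENNReal

lemma Phi_eq_integral_Iic (x : ℝ) : Phi x = ∫ t in Iic x, gaussianPDFReal 0 1 t := by
  rw [Phi, cdf_eq_real, measureReal_def, gaussianReal_apply_eq_integral 0 one_ne_zero,
    ENNReal.toReal_ofReal
      (setIntegral_nonneg measurableSet_Iic fun t _ => gaussianPDFReal_nonneg 0 1 t)]

lemma Phi_sub_Phi (a b : ℝ) : Phi b - Phi a = ∫ t in a..b, gaussianPDFReal 0 1 t := by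
  have hint := integrable_gaussianPDFReal 0 1
  rw [Phi_eq_integral_Iic, Phi_eq_integral_Iic,
    intervalIntegral.integral_Iic_sub_Iic hint.integrableOn hint.integrableOn]

lemma strictMono_Phi : StrictMono Phi := fun a b hab => by
  have hpos : 0 < ∫ t in a..b, gaussianPDFReal 0 1 t :=
    intervalIntegral.intervalIntegral_pos_of_pos (integrable_gaussianPDFReal 0 1).intervalIntegrable
      (fun x => gaussianPDFReal_pos 0 1 x one_ne_zero) hab
  linarith [Phi_sub_Phi a b]

lemma continuous_Phi : Continuous Phi := by
  have hPhi : Phi = fun b => (∫ t in (0 : ℝ)..b, gaussianPDFReal 0 1 t) + Phi 0 := by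
    funext b
    linarith [Phi_sub_Phi 0 b]
  rw [hPhi]
  exact ((integrable_gaussianPDFReal 0 1).continuous_primitive 0).add continuous_const

lemma exists_Phi_eq {y : ℝ} (h0 : 0 < y) (h1 : y < 1) : ∃ x, Phi x = y := by
  obtain ⟨a, ha⟩ := ((tendsto_cdf_atBot (gaussianReal 0 1)).eventually_lt_const h0).exists
  obtain ⟨b, hb⟩ := ((tendsto_cdf_atTop (gaussianReal 0 1)).eventually_const_lt h1).exists
  have hab : a ≤ b := strictMono_Phi.le_iff_le.mp (by exact (ha.trans hb).le)
  obtain ⟨x, -, hx⟩ := intermediate_value_Icc hab continuous_Phi.continuousOn ⟨ha.le, hb.le⟩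
  exact ⟨x, hx⟩

lemma Phi_PhiInv {y : ℝ} (h0 : 0 < y) (h1 : y < 1) : Phi (PhiInv y) = y :=
  Function.invFun_eq (exists_Phi_eq h0 h1)

lemma strictMonoOn_PhiInv : StrictMonoOn PhiInv (Ioo 0 1) := fun y hy z hz hyz => by
  rw [← strictMono_Phi.lt_iff_lt, Phi_PhiInv hy.1 hy.2, Phi_PhiInv hz.1 hz.2]
  exact hyz

lemma lt_Gmu_of_PhiInv_lt {μ α β : ℝ} (hβ : β ∈ Ioo 0 1) (h : PhiInv β < PhiInv (1 - α) - μ) :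
    β < Gmu μ α := by
  simpa only [Gmu, Phi_PhiInv hβ.1 hβ.2] using strictMono_Phi h

section TestingBounds

variable {Ω : Type*} [MeasurableSpace Ω] (P : Measure Ω) {α : ℝ}

lemma tradeOff_le_measureReal_compl {Q : Measure Ω} {E : Set Ω} (hE : MeasurableSet E)
    (hQE : Q.real E ≤ α) : tradeOff P Q α ≤ P.real Eᶜ :=
  csInf_le ⟨0, by rintro _ ⟨F, -, -, rfl⟩; exact ENNReal.toReal_nonneg⟩ ⟨E, hE, hQE, rfl⟩

lemma tradeOff_dirac_le [MeasurableSingletonClass Ω] (x : Ω) (hα : 0 ≤ α) :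
    tradeOff P (Measure.dirac x) α ≤ P.real {x} := by
  simpa using tradeOff_le_measureReal_compl P (measurableSet_singleton x).compl
    (by simpa [measureReal_def] using hα)

lemma blowUp_dirac_le [IsFiniteMeasure P] (x : Ω) (hα : α < 1) :
    blowUp P (Measure.dirac x) α ≤ P.real {x}ᶜ := by
  refine Real.sSup_le ?_ measureReal_nonneg
  rintro _ ⟨E, hE, hQE, rfl⟩
  have hxE : x ∉ E := fun hx => by
    rw [Measure.dirac_apply_of_mem hx] at hQE
    norm_num at hQE
    linarith
  exact measureReal_mono (subset_compl_singleton_iff.mpr hxE)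

end TestingBounds

noncomputable def quarterThreeQuarters : Measure ℝ :=
  (1 / 4 : ℝ≥0∞) • Measure.dirac 0 + (3 / 4 : ℝ≥0∞) • Measure.dirac 1

instance : IsProbabilityMeasure quarterThreeQuarters := by
  constructor
  simp only [quarterThreeQuarters, Measure.add_apply, Measure.smul_apply, measure_univ,
    smul_eq_mul, mul_one]
  rw [ENNReal.div_add_div_same, show (1 : ℝ≥0∞) + 3 = 4 by norm_num]
  exact ENNReal.div_self (by norm_num) (by norm_num)

lemma quarterThreeQuarters_real_zero : quarterThreeQuarters.real {0} = 1 / 4 := by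
  simp [quarterThreeQuarters, measureReal_def, Measure.add_apply]

lemma quarterThreeQuarters_real_compl_zero : quarterThreeQuarters.real {0}ᶜ = 3 / 4 := by
  rw [probReal_compl_eq_one_sub (measurableSet_singleton 0), quarterThreeQuarters_real_zero]
  norm_num

theorem stmt13 :
    ∃ (P Q : Measure ℝ), IsProbabilityMeasure P ∧ IsProbabilityMeasure Q ∧
      ∃ p r : ℝ, 0 < p ∧ p < r ∧ r < 1 ∧
        blowUp P Q p ≤ r ∧
        ∃ α ∈ Ioo (0:ℝ) 1,
          tradeOff P Q α < Gmu (PhiInv (1 - p) - PhiInv (1 - r)) α := by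
  refine ⟨quarterThreeQuarters, Measure.dirac 0, inferInstance, inferInstance, 1 / 2, 3 / 4,
    by norm_num, by norm_num, by norm_num, ?_, 1 / 4, ⟨by norm_num, by norm_num⟩, ?_⟩
  · rw [← quarterThreeQuarters_real_compl_zero]
    exact blowUp_dirac_le _ 0 (by norm_num)
  · have hPhiInv : PhiInv (1 / 2) < PhiInv (3 / 4) :=
      strictMonoOn_PhiInv ⟨by norm_num, by norm_num⟩ ⟨by norm_num, by norm_num⟩ (by norm_num)
    calc tradeOff quarterThreeQuarters (Measure.dirac 0) (1 / 4)
        ≤ quarterThreeQuarters.real {0} := tradeOff_dirac_le _ 0 (by norm_num)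
      _ = 1 / 4 := quarterThreeQuarters_real_zero
      _ < _ := lt_Gmu_of_PhiInv_lt ⟨by norm_num, by norm_num⟩ (by norm_num; linarith)
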